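/- arXiv:2104.00153 — 7 statements merged into one kernel-verified Lean document; each statement's English description precedes it below -/
import Mathlib

section
/- Let M be an additive commutative monoid, let r ≥ 1, let t_1,…,t_{r+1} ∈ M, and let 1 ≤ i ≤ r+1. Then, as multisets of lists with entries in M, ∑_{σ ∈ 𝒫(r+1,i)} {[t_{σ⁻¹(1)},…,t_{σ⁻¹(i)}]} = ∑_{j=1}^{i} ( ∑_{τ ∈ 𝒫(r,i-1)} {[t_{τ⁻¹(1)},…,t_{τ⁻¹(j-1)}, t_{r+1}, t_{τ⁻¹(j)},…,t_{τ⁻¹(i-1)}]} + ∑_{τ ∈ 𝒫(r,i)} {[t_{τ⁻¹(1)},…,t_{τ⁻¹(j-1)}, t_{r+1} + t_{τ⁻¹(j)}, t_{τ⁻¹(j+1)},…,t_{τ⁻¹(i)}]} ), where for τ ∈ 𝒫(r,·) the sums t_{τ⁻¹(k)} involve only t_1,…,t_r, and where 𝒫(r,0) and 𝒫(r,r+1) are interpreted as empty sets. -/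
open scoped BigOperators

/-- The quasi-shuffle (harmonic) product of two words. -/
def qs {M : Type*} [AddCommMonoid M] : List M → List M → Multiset (List M)
  | [], w => {w}
  | a :: u, [] => {a :: u}
  | a :: u, b :: v =>
      (qs u (b :: v)).map (a :: ·) + (qs (a :: u) v).map (b :: ·) +
        (qs u v).map (fun w => (a + b) :: w)
termination_by u v => u.length + v.length
decreasing_by all_goals (simp; try omega)

/-- `𝒫 r i`: surjections from `Fin r` onto `Fin i`. -/
def Psurj (r i : ℕ) : Finset (Fin r → Fin i) :=
  Finset.univ.filter Function.Surjective

/-- The word `[t_{σ⁻¹(1)}, …, t_{σ⁻¹(i)}]`. -/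
def wordOf {M : Type*} [AddCommMonoid M] {r i : ℕ} (t : Fin r → M) (σ : Fin r → Fin i) :
    List M :=
  List.ofFn fun k : Fin i => ∑ n ∈ Finset.univ.filter (fun n => σ n = k), t n

/-!
Sort the surjections `σ : Fin (r + 1) → Fin i` by `j = σ (last r)` and by whether the
restriction `τ = Fin.init σ` is still surjective. If it is, `σ = snoc τ j` and `t (last r)` is
added to the `j`-th letter of the word of `τ`. If it is not, `τ` misses exactly `j`, so
`τ = j.succAbove ∘ τ'` with `τ'` onto `Fin (i - 1)`, and `t (last r)` is a new letter inserted
at position `j`.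
-/

open Finset Function

theorem List.ofFn_insertNth {α : Type*} {n : ℕ} (j : Fin (n + 1)) (a : α) (g : Fin n → α) :
    List.ofFn (Fin.insertNth j a g) = (List.ofFn g).insertIdx j a := by
  induction n with
  | zero => rw [Fin.fin_one_eq_zero j]; simp [Fin.insertNth_zero']
  | succ n ih =>
    cases j using Fin.cases with
    | zero => simp [Fin.insertNth_zero']
    | succ j =>
      obtain ⟨b, g, rfl⟩ := Fin.exists_cons g
      rw [Fin.insertNth_succ_cons, List.ofFn_cons, ih, List.ofFn_cons, Fin.val_succ,
        List.insertIdx_succ_cons]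

section
variable {M α : Type*} [AddCommMonoid M] [DecidableEq α] {r : ℕ}

theorem sum_filter_snoc_eq (t : Fin (r + 1) → M) (τ : Fin r → α) (a k : α) :
    ∑ n ∈ univ.filter (fun n => Fin.snoc (α := fun _ => α) τ a n = k), t n =
      ∑ n ∈ univ.filter (fun n => τ n = k), t n.castSucc +
        if a = k then t (Fin.last r) else 0 := by
  simp [sum_filter, Fin.sum_univ_castSucc]

end

theorem Fin.range_eq_insert_range_init {α : Type*} {n : ℕ} (σ : Fin (n + 1) → α) :
    Set.range σ = insert (σ (Fin.last n)) (Set.range (Fin.init σ)) := by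
  conv_lhs => rw [← Fin.snoc_init_self σ]
  exact Fin.range_snoc _ _

theorem Fin.range_init_eq_compl_of_not_surjective {α : Type*} {n : ℕ} {σ : Fin (n + 1) → α}
    (hσ : Surjective σ) (hinit : ¬ Surjective (Fin.init σ)) :
    Set.range (Fin.init σ) = {σ (Fin.last n)}ᶜ := by
  have hrange := Fin.range_eq_insert_range_init σ
  rw [hσ.range_eq] at hrange
  have hmiss : σ (Fin.last n) ∉ Set.range (Fin.init σ) := fun h =>
    hinit (Set.range_eq_univ.1 (by rw [← Set.insert_eq_of_mem h, hrange]))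
  rw [Set.compl_eq_univ_sdiff, hrange, Set.insert_sdiff_self_of_notMem hmiss]

@[simp]
theorem mem_Psurj {r i : ℕ} {σ : Fin r → Fin i} : σ ∈ Psurj r i ↔ Surjective σ := by
  simp [Psurj]

section
variable {M : Type*} [AddCommMonoid M] {r i : ℕ}

theorem wordOf_snoc (t : Fin (r + 1) → M) (τ : Fin r → Fin i) (j : Fin i) :
    wordOf t (Fin.snoc τ j) = List.ofFn fun k : Fin i =>
      if k = j then t (Fin.last r) + ∑ n ∈ univ.filter (fun n => τ n = k), t n.castSucc
      else ∑ n ∈ univ.filter (fun n => τ n = k), t n.castSucc := by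
  simp only [wordOf, sum_filter_snoc_eq]
  congr 1
  funext k
  by_cases h : k = j
  · simp [h, add_comm]
  · simp [h, Ne.symm h]

theorem wordOf_snoc_succAbove (t : Fin (r + 1) → M) (τ : Fin r → Fin i) (j : Fin (i + 1)) :
    wordOf t (Fin.snoc (j.succAbove ∘ τ) j) =
      (wordOf (fun n : Fin r => t n.castSucc) τ).insertIdx j (t (Fin.last r)) := by
  rw [wordOf, wordOf, ← List.ofFn_insertNth]
  congr 1
  refine funext (Fin.succAboveCases j ?_ fun m => ?_)
  · simp [sum_filter_snoc_eq, Fin.succAbove_ne]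
  · simp [sum_filter_snoc_eq, Fin.succAbove_right_injective.eq_iff, (Fin.succAbove_ne j m).symm]

end

section
variable {β : Type*} [AddCommMonoid β] {r i : ℕ}

theorem sum_psurj_filter_init_surjective (f : (Fin (r + 1) → Fin i) → β) (j : Fin i) :
    ∑ σ ∈ ((Psurj (r + 1) i).filter fun σ => σ (Fin.last r) = j).filter
        (fun σ => Surjective (Fin.init σ)), f σ =
      ∑ τ ∈ Psurj r i, f (Fin.snoc τ j) := by
  refine (sum_nbij' (fun τ => (Fin.snoc τ j : Fin (r + 1) → Fin i)) Fin.init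
    ?_ ?_ ?_ ?_ fun _ _ => rfl).symm
  · intro τ hτ
    simp_all [← Set.range_eq_univ]
  · intro σ hσ
    simp_all
  · intro τ _
    exact Fin.init_snoc _ _
  · intro σ hσ
    simp only [mem_filter] at hσ
    rw [← hσ.1.2]
    exact Fin.snoc_init_self σ

theorem sum_psurj_filter_init_not_surjective (f : (Fin (r + 1) → Fin (i + 1)) → β)
    (j : Fin (i + 1)) :
    ∑ σ ∈ ((Psurj (r + 1) (i + 1)).filter fun σ => σ (Fin.last r) = j).filter
        (fun σ => ¬ Surjective (Fin.init σ)), f σ =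
      ∑ τ ∈ Psurj r i, f (Fin.snoc (j.succAbove ∘ τ) j) := by
  refine (sum_nbij (fun τ => (Fin.snoc (j.succAbove ∘ τ) j : Fin (r + 1) → Fin (i + 1)))
    ?_ ?_ ?_ fun _ _ => rfl).symm
  · intro τ hτ
    simp_all [← Set.range_eq_univ, Set.range_comp, Set.insert_eq]
  · intro τ₁ _ τ₂ _ h
    exact (Fin.succAbove_right_injective.comp_left) (Fin.snoc_left_injective _ h)
  · intro σ hσ
    simp only [coe_filter, Set.mem_ofPred_eq, mem_filter, mem_Psurj] at hσ
    obtain ⟨⟨hσ, rfl⟩, hinit⟩ := hσ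
    have hcompl := Fin.range_init_eq_compl_of_not_surjective hσ hinit
    rw [← Fin.range_succAbove] at hcompl
    obtain ⟨τ, hτ⟩ := Set.range_subset_range_iff_exists_comp.1 hcompl.le
    refine ⟨τ, mem_Psurj.2 (Set.range_eq_univ.1 ?_), ?_⟩
    · refine Set.image_injective.2 (Fin.succAbove_right_injective (p := σ (Fin.last r))) ?_
      rw [Set.image_univ, ← Set.range_comp, ← hτ, hcompl]
    · dsimp only
      rw [← hτ, Fin.snoc_init_self]

end

theorem sum_word_surj_succ_general {M : Type*} [AddCommMonoid M] (r i : ℕ) (t : Fin (r + 1) → M) :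
    (∑ σ ∈ Psurj (r + 1) i, ({wordOf t σ} : Multiset (List M))) =
      ∑ j : Fin i,
        ((∑ τ ∈ Psurj r (i - 1),
            ({(wordOf (fun n : Fin r => t n.castSucc) τ).insertIdx j (t (Fin.last r))} :
              Multiset (List M))) +
          ∑ τ ∈ Psurj r i,
            ({List.ofFn fun k : Fin i =>
                if k = j then
                  t (Fin.last r) + ∑ n ∈ Finset.univ.filter (fun n => τ n = k), t n.castSucc
                else ∑ n ∈ Finset.univ.filter (fun n => τ n = k), t n.castSucc} :
              Multiset (List M))) := by
  cases i with
  | zero => simp [Psurj]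
  | succ i =>
    rw [← sum_fiberwise (Psurj (r + 1) (i + 1)) (fun σ => σ (Fin.last r))]
    refine sum_congr rfl fun j _ => ?_
    rw [← sum_filter_not_add_sum_filter _ (fun σ => Surjective (Fin.init σ)),
      sum_psurj_filter_init_not_surjective, sum_psurj_filter_init_surjective, Nat.add_sub_cancel]
    simp only [wordOf_snoc_succAbove]
    simp only [wordOf_snoc]

/-- Key combinatorial lemma (Lemma 3.3 of the paper): for `1 ≤ i ≤ r+1`, the multiset of words
`[t_{σ⁻¹(1)},…,t_{σ⁻¹(i)}]` over surjections `σ ∈ 𝒫(r+1,i)` decomposes according to the position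
of `t_{r+1}`: one either inserts `t_{r+1}` as a new letter at one of the `i` places of a word
coming from `τ ∈ 𝒫(r,i-1)`, or adds `t_{r+1}` to one of the `i` letters of a word coming from
`τ ∈ 𝒫(r,i)`.  (Here `𝒫(r,0)` and `𝒫(r,r+1)` are empty.) -/
theorem sum_word_surj_succ {M : Type*} [AddCommMonoid M] (r i : ℕ) (hr : 1 ≤ r)
    (hi1 : 1 ≤ i) (hi2 : i ≤ r + 1) (t : Fin (r + 1) → M) :
    (∑ σ ∈ Psurj (r + 1) i, ({wordOf t σ} : Multiset (List M))) =
      ∑ j : Fin i,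
        ((∑ τ ∈ Psurj r (i - 1),
            ({(wordOf (fun n : Fin r => t n.castSucc) τ).insertIdx j (t (Fin.last r))} :
              Multiset (List M))) +
          ∑ τ ∈ Psurj r i,
            ({List.ofFn fun k : Fin i =>
                if k = j then
                  t (Fin.last r) + ∑ n ∈ Finset.univ.filter (fun n => τ n = k), t n.castSucc
                else ∑ n ∈ Finset.univ.filter (fun n => τ n = k), t n.castSucc} :
              Multiset (List M))) :=
  sum_word_surj_succ_general r i t
end

section
/- Let M be an additive commutative monoid, let r ≥ 1, and let a, t_1,…,t_r ∈ M. Then, as multisets of lists with entries in M, qs [a] [t_1,…,t_r] = ∑_{j=1}^{r+1} {[t_1,…,t_{j-1}, a, t_j,…,t_r]} + ∑_{j=1}^{r} {[t_1,…,t_{j-1}, a + t_j, t_{j+1},…,t_r]}. -/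
open scoped BigOperators

/-! Peeling off the first letter `b` of the word, `qs [a] (b :: v)` consists of `a :: b :: v`,
`(a + b) :: v`, and `b` prepended to `qs [a] v`; the insertions of `a` into `b :: v` and the
words obtained by adding `a` to one letter of `b :: v` split up in exactly the same way, so the
formula holds for every word by induction. -/

open Finset

theorem Multiset.map_finsetSum {α β ι : Type*} (f : α → β) (s : Finset ι) (g : ι → Multiset α) :
    (∑ i ∈ s, g i).map f = ∑ i ∈ s, (g i).map f :=
  map_sum (Multiset.mapAddMonoidHom f) g s

theorem List.modify_ofFn {α : Type*} {n : ℕ} (t : Fin n → α) (j : Fin n) (f : α → α) :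
    (ofFn t).modify j f = ofFn fun k => if k = j then f (t k) else t k := by
  refine List.ext_getElem (by simp) fun m _ hm => ?_
  simp only [List.getElem_modify, List.getElem_ofFn]
  simp [Fin.ext_iff, eq_comm]

section

variable {M : Type*} [AddCommMonoid M]

theorem qs_singleton_cons (a b : M) (v : List M) :
    qs [a] (b :: v) = {a :: b :: v} + (qs [a] v).map (b :: ·) + {(a + b) :: v} := by
  simp [qs]

theorem qs_singleton_left (a : M) (w : List M) :
    qs [a] w = ∑ j ∈ range (w.length + 1), {w.insertIdx j a} +
      ∑ j ∈ range w.length, {w.modify j (a + ·)} := by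
  induction w with
  | nil => simp [qs]
  | cons b v ih =>
    rw [qs_singleton_cons, ih]
    simp only [Multiset.map_add, Multiset.map_finsetSum, Multiset.map_singleton,
      List.length_cons, sum_range_succ', List.insertIdx_succ_cons, List.insertIdx_zero,
      List.modify_succ_cons, List.modify_zero_cons]
    abel

end

theorem qs_singleton_general {M : Type*} [AddCommMonoid M] (r : ℕ)
    (a : M) (t : Fin r → M) :
    qs [a] (List.ofFn t) =
      (∑ j : Fin (r + 1), ({(List.ofFn t).insertIdx j a} : Multiset (List M))) +
        ∑ j : Fin r,
          ({List.ofFn fun k : Fin r => if k = j then a + t k else t k} : Multiset (List M)) := by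
  rw [qs_singleton_left, List.length_ofFn, ← Fin.sum_univ_eq_sum_range (fun j => {_}),
    ← Fin.sum_univ_eq_sum_range (fun j => {_})]
  simp only [List.modify_ofFn]

/-- Quasi-shuffle of a one-letter word `[a]` with `[t₁,…,t_r]`:
the sum of all insertions of `a` into the word, plus the sum of all words obtained
by adding `a` to one of the letters. -/
theorem qs_singleton {M : Type*} [AddCommMonoid M] (r : ℕ) (hr : 1 ≤ r)
    (a : M) (t : Fin r → M) :
    qs [a] (List.ofFn t) =
      (∑ j : Fin (r + 1), ({(List.ofFn t).insertIdx j a} : Multiset (List M))) +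
        ∑ j : Fin r,
          ({List.ofFn fun k : Fin r => if k = j then a + t k else t k} : Multiset (List M)) :=
  qs_singleton_general r a t
end

section
/- Let M be an additive commutative monoid. For all lists u, v with entries in M, qs u v = qs v u as multisets of lists; that is, the quasi-shuffle (harmonic) product is commutative. -/
open scoped BigOperators

/-- The quasi-shuffle (harmonic) product is commutative. -/
theorem qs_comm {M : Type*} [AddCommMonoid M] (u v : List M) :
    qs u v = qs v u := by
  induction u, v using qs.induct with
  | case1 w => cases w <;> simp [qs]
  | case2 a u => simp [qs]
  | case3 a u b v ih1 ih2 ih3 =>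
    rw [qs, qs, ih1, ih2, ih3, add_comm b a]
    abel
end

section
/- Let M be an additive commutative monoid. For all lists u, v, w with entries in M, (qs u v).bind (λ α, qs α w) = (qs v w).bind (λ β, qs u β) as multisets of lists; that is, the quasi-shuffle (harmonic) product is associative. -/
open scoped BigOperators

lemma qs_nil_left {M : Type*} [AddCommMonoid M] (w : List M) : qs [] w = {w} := by
  rw [qs]

lemma qs_nil_right {M : Type*} [AddCommMonoid M] (u : List M) : qs u [] = {u} := by
  cases u <;> rw [qs]

lemma qs_cons {M : Type*} [AddCommMonoid M] (a b : M) (u v : List M) :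
    qs (a :: u) (b :: v) =
      (qs u (b :: v)).map (a :: ·) + (qs (a :: u) v).map (b :: ·) +
        (qs u v).map (fun w => (a + b) :: w) := by
  rw [qs]

lemma bind_singleton_id {α : Type*} (s : Multiset α) :
    (s.bind fun x => ({x} : Multiset α)) = s := by
  simpa using Multiset.bind_singleton (s := s) id

/-- The quasi-shuffle (harmonic) product is associative. -/
theorem qs_assoc {M : Type*} [AddCommMonoid M] (u v w : List M) :
    (qs u v).bind (fun α => qs α w) = (qs v w).bind (fun β => qs u β) := by
  match u, v, w with
  | [], v, w => simp [qs_nil_left, bind_singleton_id]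
  | a :: u, [], w => simp [qs_nil_left, qs_nil_right]
  | a :: u, b :: v, [] => simp [qs_nil_left, qs_nil_right, bind_singleton_id]
  | a :: u, b :: v, c :: w =>
    have e1 := congrArg (Multiset.map (a :: ·)) (qs_assoc u (b :: v) (c :: w))
    have e2 := congrArg (Multiset.map (b :: ·)) (qs_assoc (a :: u) v (c :: w))
    have e3 := congrArg (Multiset.map (c :: ·)) (qs_assoc (a :: u) (b :: v) w)
    have e4 := congrArg (Multiset.map (fun x => (a + b) :: x)) (qs_assoc u v (c :: w))
    have e5 := congrArg (Multiset.map (fun x => (a + c) :: x)) (qs_assoc u (b :: v) w)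
    have e6 := congrArg (Multiset.map (fun x => (b + c) :: x)) (qs_assoc (a :: u) v w)
    have e7 := congrArg (Multiset.map (fun x => (a + (b + c)) :: x)) (qs_assoc u v w)
    simp only [qs_cons, Multiset.add_bind, Multiset.bind_map, Multiset.bind_add,
      ← Multiset.map_bind, Multiset.map_add, add_assoc] at e1 e2 e3 e4 e5 e6 e7 ⊢
    rw [e1, e2, e4, e5, e6, e7, ← e3]
    abel
termination_by u.length + v.length + w.length
decreasing_by all_goals (simp; try omega)
end

section
/- Let 𝔷 and Z_* be as in the context. For all r, s ≥ 1, in the ring of multivariate formal power series over ℂ in variables X_1,…,X_{r+s}, one has Z_*(X_1,…,X_r) · Z_*(X_{r+1},…,X_{r+s}) = ∑_{α ∈ qs [X_1,…,X_r] [X_{r+1},…,X_{r+s}]} Z_*(α), where qs is the quasi-shuffle product on lists of power series with respect to addition of power series (so each entry of each list α in the multiset qs [X_1,…,X_r] [X_{r+1},…,X_{r+s}] is a sum of distinct variables X_n). -/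
/-!
Write a sum of distinct variables `∑_{i ∈ S} Xᵢ` as the image of its indicator vector `c = 𝟙_S`
under the additive map `c ↦ ∑ᵢ cᵢ • Xᵢ`. Since `qs` commutes with additive maps, the words of
`qs [X₁,…,X_r] [X_{r+1},…,X_{r+s}]` are the images of the words of
`qs [e₁,…,e_r] [e_{r+1},…,e_{r+s}]`, and the letters of each of these partition the variables.
For letters `c₁,…,c_m` with disjoint supports, the multinomial theorem applied block by block
shows that the coefficient of `X^d` in `Z_*(∑ c₁ᵢ Xᵢ, …, ∑ c_mᵢ Xᵢ)` is
`𝔷(⟨d, c₁⟩, …, ⟨d, c_m⟩) · ∏ᵢ (-1)^{dᵢ}/dᵢ!` when `d` is supported on the union of the supports,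
and `0` otherwise. Hence the coefficient of `X^d` is `𝔷(w)𝔷(w') · ∏ᵢ (-1)^{dᵢ}/dᵢ!` on the left
and `∑_{α ∈ qs w w'} 𝔷(α) · ∏ᵢ (-1)^{dᵢ}/dᵢ!` on the right, where `w = [d₁,…,d_r]` and
`w' = [d_{r+1},…,d_{r+s}]`; these agree by the harmonic product relation for `𝔷`.
-/

open scoped BigOperators

/-- The generating series `Z_*(u₁,…,u_m)` of `𝔷`, for power series `uⱼ`
with zero constant term; its coefficient at a monomial `d` is the (finite) sum
`∑_k 𝔷([k₁,…,k_m]) · coeff d (∏ⱼ (-uⱼ)^{kⱼ}/kⱼ!)`. -/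
noncomputable def Zstar {n : ℕ} (z : List ℕ → ℂ) (u : List (MvPowerSeries (Fin n) ℂ)) :
    MvPowerSeries (Fin n) ℂ :=
  fun d => ∑ k ∈ Fintype.piFinset (fun _ : Fin u.length => Finset.range ((∑ i, d i) + 1)),
    z (List.ofFn k) *
      MvPowerSeries.coeff d
        (∏ j : Fin u.length, (((k j).factorial : ℂ))⁻¹ • (-(u.get j)) ^ (k j))

open Finset Function

theorem qs_map {M N F : Type*} [AddCommMonoid M] [AddCommMonoid N] [FunLike F M N]
    [AddMonoidHomClass F M N] (f : F) :
    ∀ u v : List M, qs (u.map f) (v.map f) = (qs u v).map (List.map f)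
  | [], w => by simp [qs]
  | a :: u, [] => by simp [qs]
  | a :: u, b :: v => by
    have h₁ := qs_map f u (b :: v)
    have h₂ := qs_map f (a :: u) v
    simp only [List.map_cons] at h₁ h₂
    simp [qs, h₁, h₂, qs_map f u v, Multiset.map_map]
  termination_by u v => u.length + v.length

theorem sum_eq_of_mem_qs {M : Type*} [AddCommMonoid M] :
    ∀ {u v γ : List M}, γ ∈ qs u v → γ.sum = u.sum + v.sum
  | [], w, γ, h => by simp_all [qs]
  | a :: u, [], γ, h => by simp_all [qs]
  | a :: u, b :: v, γ, h => by
    simp only [qs, Multiset.mem_add, Multiset.mem_map] at h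
    rcases h with (⟨δ, hδ, rfl⟩ | ⟨δ, hδ, rfl⟩) | ⟨δ, hδ, rfl⟩ <;>
      simp only [List.sum_cons, sum_eq_of_mem_qs hδ] <;> abel
  termination_by u v => u.length + v.length

theorem MvPowerSeries.coeff_inv_factorial_smul_pow_sum_smul_X {σ K : Type*} [Fintype σ] [Field K]
    [CharZero K] (a : σ → K) (k : ℕ) (e : σ →₀ ℕ) :
    coeff e ((k.factorial : K)⁻¹ • (∑ i, a i • X i : MvPowerSeries σ K) ^ k) =
      if ∑ i, e i = k then ∏ i, a i ^ e i / (e i).factorial else 0 := by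
  have hpoly : (∑ i, a i • X i : MvPowerSeries σ K) =
      MvPolynomial.coeToMvPowerSeries.ringHom (∑ i, a i • MvPolynomial.X i) := by
    simp [MvPolynomial.coeToMvPowerSeries.ringHom_apply]
  rw [hpoly, ← map_pow, MvPolynomial.coeToMvPowerSeries.ringHom_apply, map_smul,
    MvPolynomial.coeff_coe, MvPolynomial.coeff_linearCombination_X_pow_of_fintype,
    Finsupp.sum_fintype _ _ (fun _ => rfl), Finsupp.prod_fintype _ _ (fun _ => pow_zero _),
    smul_eq_mul]
  split_ifs with he
  · have hspec := Nat.multinomial_spec Finset.univ e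
    rw [← Finsupp.multinomial_eq_of_support_subset (subset_univ _), he] at hspec
    rw [prod_div_distrib, ← hspec]
    have hm : (e.multinomial : K) ≠ 0 :=
      Nat.cast_ne_zero.2 fun h => k.factorial_ne_zero (by simp [← hspec, h])
    have hfac : ∏ i, ((e i).factorial : K) ≠ 0 :=
      prod_ne_zero_iff.2 fun i _ => Nat.cast_ne_zero.2 (Nat.factorial_ne_zero _)
    push_cast
    field_simp
  · exact mul_zero _

-- the coefficient of `X^e` in `exp (-∑ᵢ Xᵢ)`
noncomputable def expNegCoeff {σ : Type*} [Fintype σ] (e : σ →₀ ℕ) : ℂ :=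
  ∏ i, (-1) ^ e i / (e i).factorial

open Classical in
theorem MvPowerSeries.coeff_inv_factorial_smul_neg_linearCombination_pow {σ : Type*} [Fintype σ]
    {c : σ → ℕ} (hc : c ≤ 1) (k : ℕ) (e : σ →₀ ℕ) :
    coeff e ((k.factorial : ℂ)⁻¹ •
        (-Fintype.linearCombination ℕ X c : MvPowerSeries σ ℂ) ^ k) =
      if ↑e.support ⊆ support c ∧ ∑ i, e i = k then expNegCoeff e else 0 := by
  have hneg : (-Fintype.linearCombination ℕ X c : MvPowerSeries σ ℂ) =
      ∑ i, (-(c i : ℂ)) • X i := by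
    simp [Fintype.linearCombination_apply, ← Nat.cast_smul_eq_nsmul ℂ]
  rw [hneg, coeff_inv_factorial_smul_pow_sum_smul_X, expNegCoeff]
  by_cases hsupp : ↑e.support ⊆ support c
  · simp only [hsupp, true_and]
    congr 1
    refine prod_congr rfl fun i _ => ?_
    by_cases hi : e i = 0
    · simp [hi]
    · have : c i = 1 := le_antisymm (hc i) (Nat.one_le_iff_ne_zero.2 (hsupp (by simpa using hi)))
      simp [this]
  · obtain ⟨i, hie, hci⟩ := Set.not_subset.1 hsupp
    simp only [hsupp, false_and, if_false, ite_eq_right_iff]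
    intro _
    refine prod_eq_zero (mem_univ i) ?_
    simp_all

theorem Finsupp.coe_support_filter_mem_subset {σ M : Type*} [Zero M] (S : Set σ)
    [DecidablePred (· ∈ S)] (d : σ →₀ M) : ↑(d.filter (· ∈ S)).support ⊆ S := fun _ hi =>
  by_contra fun h => Finsupp.mem_support_iff.1 hi (Finsupp.filter_apply_neg _ _ h)

theorem mem_iff_eq_of_pairwise_disjoint {ι α : Type*} {S : ι → Set α}
    (hS : Pairwise (Disjoint on S)) {a : α} {j j' : ι} (ha : a ∈ S j) : a ∈ S j' ↔ j' = j :=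
  ⟨fun ha' => by_contra fun hne => Set.disjoint_left.1 (hS hne) ha' ha, fun h => h ▸ ha⟩

open Classical in
theorem MvPowerSeries.coeff_prod_of_support_subset {ι σ R : Type*} [Fintype ι] [CommSemiring R]
    (S : ι → Set σ) (hS : Pairwise (Disjoint on S)) (F : ι → MvPowerSeries σ R)
    (hF : ∀ j e, coeff e (F j) ≠ 0 → ↑e.support ⊆ S j) (d : σ →₀ ℕ) :
    coeff d (∏ j, F j) =
      if ↑d.support ⊆ ⋃ j, S j then ∏ j, coeff (d.filter (· ∈ S j)) (F j) else 0 := by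
  have hsum : ∀ (x : ι → σ →₀ ℕ), (∀ j, ↑(x j).support ⊆ S j) → ∀ i j, i ∈ S j →
      ∑ j', x j' i = x j i := fun x hx i j hi =>
    sum_eq_single j (fun j' _ hj' => by_contra fun h =>
      hj' ((mem_iff_eq_of_pairwise_disjoint hS hi).1 (hx j' (by simpa using h)))) (by simp)
  rw [coeff_prod]
  have key : ∀ x ∈ finsuppAntidiag univ d, (∏ j, coeff (x j) (F j)) ≠ 0 →
      ↑d.support ⊆ ⋃ j, S j ∧ ∀ j, x j = d.filter (· ∈ S j) := by
    intro x hx hne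
    have hxS : ∀ j, ↑(x j).support ⊆ S j :=
      fun j => hF j _ fun h => hne (prod_eq_zero (mem_univ j) h)
    have hd : ∀ i, d i = ∑ j, x j i := fun i => by
      rw [← (mem_finsuppAntidiag.1 hx).1, Finsupp.finsetSum_apply]
    refine ⟨fun i hi => ?_, fun j => Finsupp.ext fun i => ?_⟩
    · obtain ⟨j, -, hj⟩ := exists_ne_zero_of_sum_ne_zero ((hd i) ▸ Finsupp.mem_support_iff.1 hi)
      exact Set.mem_iUnion.2 ⟨j, hxS j (Finsupp.mem_support_iff.2 hj)⟩
    · rw [Finsupp.filter_apply, hd i]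
      split_ifs with hij
      · exact (hsum x hxS i j hij).symm
      · exact by_contra fun h => hij (hxS j (Finsupp.mem_support_iff.2 h))
  split_ifs with hd
  · rw [sum_eq_single (Finsupp.equivFunOnFinite.symm fun j => d.filter (· ∈ S j))]
    · simp
    · intro x hx hne
      exact by_contra fun h => hne (Finsupp.ext fun j => by simpa using (key x hx h).2 j)
    · intro hx
      refine absurd (mem_finsuppAntidiag.2 ⟨Finsupp.ext fun i => ?_, subset_univ _⟩) hx
      rw [Finsupp.finsetSum_apply]
      by_cases hi : d i = 0
      · simp [Finsupp.filter_apply, hi]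
      · obtain ⟨j, hj⟩ := Set.mem_iUnion.1 (hd (Finsupp.mem_support_iff.2 hi))
        simp [Finsupp.filter_apply, mem_iff_eq_of_pairwise_disjoint hS hj]
  · exact sum_eq_zero fun x hx => by_contra fun h => hd (key x hx h).1

open Classical in
theorem prod_expNegCoeff_filter {ι σ : Type*} [Fintype ι] [Fintype σ] {S : ι → Set σ}
    (hS : Pairwise (Disjoint on S)) {d : σ →₀ ℕ} (hd : ↑d.support ⊆ ⋃ j, S j) :
    ∏ j, expNegCoeff (d.filter (· ∈ S j)) = expNegCoeff d := by
  simp only [expNegCoeff, Finsupp.filter_apply]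
  rw [prod_comm]
  refine prod_congr rfl fun i _ => ?_
  by_cases hi : d i = 0
  · simp [hi]
  · obtain ⟨j, hj⟩ := Set.mem_iUnion.1 (hd (by simpa using hi))
    rw [prod_eq_single j (fun j' _ hj' => by simp [mem_iff_eq_of_pairwise_disjoint hS hj, hj'])
      (by simp)]
    simp [hj]

-- `(List.ofFn g).length = m` holds only propositionally, hence the detour through `key`.
theorem coeff_Zstar_ofFn {n m : ℕ} (z : List ℕ → ℂ) (g : Fin m → MvPowerSeries (Fin n) ℂ)
    (d : Fin n →₀ ℕ) :
    MvPowerSeries.coeff d (Zstar z (List.ofFn g)) =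
      ∑ k ∈ Fintype.piFinset (fun _ : Fin m => range (∑ i, d i + 1)),
        z (List.ofFn k) *
          MvPowerSeries.coeff d (∏ j, ((k j).factorial : ℂ)⁻¹ • (-g j) ^ k j) := by
  have key : ∀ (u : List (MvPowerSeries (Fin n) ℂ)) (h : u.length = m),
      (∀ j, u.get (Fin.cast h.symm j) = g j) → MvPowerSeries.coeff d (Zstar z u) =
      ∑ k ∈ Fintype.piFinset (fun _ : Fin m => range (∑ i, d i + 1)),
        z (List.ofFn k) *
          MvPowerSeries.coeff d (∏ j, ((k j).factorial : ℂ)⁻¹ • (-g j) ^ k j) := by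
    rintro u rfl hg
    obtain rfl : g = u.get := funext fun j => (hg j).symm
    rfl
  exact key _ List.length_ofFn (by simp)

theorem pairwise_disjoint_support_of_sum_le_one {ι σ : Type*} [Fintype ι] (b : ι → σ → ℕ)
    (hb : ∑ j, b j ≤ 1) : Pairwise (Disjoint on fun j => support (b j)) := by
  classical
  intro j j' hne
  refine Set.disjoint_left.2 fun i hi hi' => ?_
  have h2 : b j i + b j' i ≤ 1 := by
    have := sum_le_sum_of_subset (f := fun j => b j i) (subset_univ {j, j'})
    rw [sum_pair hne] at this
    exact this.trans (by simpa [Finset.sum_apply] using hb i)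
  simp only [mem_support] at hi hi'
  omega

open Classical in
theorem coeff_prod_inv_factorial_smul_neg_linearCombination_pow {ι σ : Type*} [Fintype ι]
    [Fintype σ] (b : ι → σ → ℕ) (hb : ∑ j, b j ≤ 1) (k : ι → ℕ) (d : σ →₀ ℕ) :
    MvPowerSeries.coeff d (∏ j, ((k j).factorial : ℂ)⁻¹ •
        (-Fintype.linearCombination ℕ MvPowerSeries.X (b j)) ^ k j) =
      if ↑d.support ⊆ ⋃ j, support (b j) ∧ k = fun j => Fintype.linearCombination ℕ ⇑d (b j)
      then expNegCoeff d else 0 := by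
  have hb₁ : ∀ j, b j ≤ 1 := fun j =>
    (single_le_sum (f := b) (fun _ _ => zero_le) (mem_univ j)).trans hb
  have hdisj := pairwise_disjoint_support_of_sum_le_one b hb
  rw [MvPowerSeries.coeff_prod_of_support_subset _ hdisj _ (fun j e he => by
    rw [MvPowerSeries.coeff_inv_factorial_smul_neg_linearCombination_pow (hb₁ j)] at he
    exact (ite_ne_right_iff.1 he).1.1)]
  by_cases hd : ↑d.support ⊆ ⋃ j, support (b j)
  · have hsupp := fun j => Finsupp.coe_support_filter_mem_subset (support (b j)) d
    have hdeg : ∀ j, ∑ i, d.filter (· ∈ support (b j)) i =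
        Fintype.linearCombination ℕ ⇑d (b j) := fun j => by
        rw [Fintype.linearCombination_apply]
        refine sum_congr rfl fun i _ => ?_
        rcases Nat.le_one_iff_eq_zero_or_eq_one.1 (hb₁ j i) with h | h <;> simp [h]
    simp only [MvPowerSeries.coeff_inv_factorial_smul_neg_linearCombination_pow (hb₁ _), hd,
      hsupp, hdeg, true_and, if_true, Fintype.prod_ite_zero, prod_expNegCoeff_filter hdisj hd,
      funext_iff, eq_comm]
  · simp [hd]

open Classical in
theorem coeff_Zstar_map_linearCombination {n : ℕ} (z : List ℕ → ℂ) {β : List (Fin n → ℕ)}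
    (hβ : β.sum ≤ 1) (d : Fin n →₀ ℕ) :
    MvPowerSeries.coeff d (Zstar z (β.map (Fintype.linearCombination ℕ MvPowerSeries.X))) =
      if ↑d.support ⊆ support β.sum
      then z (β.map (Fintype.linearCombination ℕ ⇑d)) * expNegCoeff d else 0 := by
  obtain ⟨m, b, rfl⟩ : ∃ (m : ℕ) (b : Fin m → Fin n → ℕ), β = List.ofFn b :=
    ⟨_, _, (List.ofFn_get β).symm⟩
  rw [List.sum_ofFn] at hβ ⊢
  have hsupp : support (∑ j, b j) = ⋃ j, support (b j) := by
    ext i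
    simp [Finset.sum_apply, Finset.sum_eq_zero_iff]
  set k₀ : Fin m → ℕ := fun j => Fintype.linearCombination ℕ ⇑d (b j)
  have hk₀ : k₀ ∈ Fintype.piFinset fun _ => range (∑ i, d i + 1) := by
    refine Fintype.mem_piFinset.2 fun j => mem_range_succ_iff.2 ?_
    simp only [k₀, Fintype.linearCombination_apply]
    refine sum_le_sum fun i _ => ?_
    have hbji : b j i ≤ 1 := (single_le_sum (f := fun j => b j i) (fun _ _ => zero_le)
      (mem_univ j)).trans (by simpa [Finset.sum_apply] using hβ i)
    simpa using Nat.mul_le_mul_right (d i) hbji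
  simp only [List.map_ofFn, coeff_Zstar_ofFn, Function.comp_def,
    coeff_prod_inv_factorial_smul_neg_linearCombination_pow b hβ, hsupp, ite_and, mul_ite,
    mul_zero]
  split_ifs
  · rw [sum_ite_eq', if_pos hk₀]
  · exact sum_const_zero

theorem linearCombination_filter_of_support_subset {σ : Type*} [Fintype σ] {T : Set σ}
    [DecidablePred (· ∈ T)] {c : σ → ℕ} (hc : support c ⊆ T) (d : σ →₀ ℕ) :
    Fintype.linearCombination ℕ ⇑(d.filter (· ∈ T)) c = Fintype.linearCombination ℕ ⇑d c := by
  simp only [Fintype.linearCombination_apply, Finsupp.filter_apply]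
  refine sum_congr rfl fun i _ => ?_
  by_cases hi : c i = 0
  · simp [hi]
  · simp [hc hi]

theorem coeff_Zstar_map_linearCombination_of_sum_eq_one {n : ℕ} (z : List ℕ → ℂ)
    {β : List (Fin n → ℕ)} (hβ : β.sum = 1) (d : Fin n →₀ ℕ) :
    MvPowerSeries.coeff d (Zstar z (β.map (Fintype.linearCombination ℕ MvPowerSeries.X))) =
      z (β.map (Fintype.linearCombination ℕ ⇑d)) * expNegCoeff d := by
  rw [coeff_Zstar_map_linearCombination z hβ.le, if_pos]
  simp [hβ]

theorem coeff_prod_Zstar_map_linearCombination {ι : Type*} [Fintype ι] {n : ℕ}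
    (z : List ℕ → ℂ) (β : ι → List (Fin n → ℕ)) (hβ : ∑ j, (β j).sum = 1) (d : Fin n →₀ ℕ) :
    MvPowerSeries.coeff d
        (∏ j, Zstar z ((β j).map (Fintype.linearCombination ℕ MvPowerSeries.X))) =
      (∏ j, z ((β j).map (Fintype.linearCombination ℕ ⇑d))) * expNegCoeff d := by
  classical
  have hle : ∀ j, (β j).sum ≤ 1 := fun j =>
    hβ ▸ single_le_sum (f := fun j => (β j).sum) (fun _ _ => zero_le) (mem_univ j)
  have hS := pairwise_disjoint_support_of_sum_le_one _ hβ.le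
  have hcover : ↑d.support ⊆ ⋃ j, support (β j).sum := fun i _ => by
    have : ∑ j, (β j).sum i = 1 := by simpa [Finset.sum_apply] using congrFun hβ i
    obtain ⟨j, -, hj⟩ := exists_ne_zero_of_sum_ne_zero (this ▸ one_ne_zero)
    exact Set.mem_iUnion.2 ⟨j, hj⟩
  rw [MvPowerSeries.coeff_prod_of_support_subset _ hS _ (fun j e he => by
    rw [coeff_Zstar_map_linearCombination z (hle j)] at he
    exact (ite_ne_right_iff.1 he).1), if_pos hcover, ← prod_expNegCoeff_filter hS hcover,
    ← prod_mul_distrib]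
  refine prod_congr rfl fun j _ => ?_
  rw [coeff_Zstar_map_linearCombination z (hle j),
    if_pos (Finsupp.coe_support_filter_mem_subset _ d)]
  congr 2
  refine List.map_congr_left fun c hc => linearCombination_filter_of_support_subset ?_ d
  intro i hi
  exact ne_of_gt (lt_of_lt_of_le (Nat.pos_of_ne_zero hi) (List.le_sum_of_mem hc i))

theorem coeff_sum_map_Zstar_qs {n : ℕ} (z : List ℕ → ℂ) {β₁ β₂ : List (Fin n → ℕ)}
    (hβ : β₁.sum + β₂.sum = 1) (d : Fin n →₀ ℕ) :
    MvPowerSeries.coeff d ((qs (β₁.map (Fintype.linearCombination ℕ MvPowerSeries.X))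
        (β₂.map (Fintype.linearCombination ℕ MvPowerSeries.X))).map (Zstar z)).sum =
      ((qs (β₁.map (Fintype.linearCombination ℕ ⇑d))
        (β₂.map (Fintype.linearCombination ℕ ⇑d))).map z).sum * expNegCoeff d := by
  rw [qs_map, qs_map, map_multiset_sum, Multiset.map_map, Multiset.map_map, Multiset.map_map,
    ← Multiset.sum_map_mul_right]
  refine congrArg _ (Multiset.map_congr rfl fun γ hγ => ?_)
  exact coeff_Zstar_map_linearCombination_of_sum_eq_one z ((sum_eq_of_mem_qs hγ).trans hβ) d

theorem ofFn_X_eq_map_linearCombination {σ : Type*} [Fintype σ] [DecidableEq σ] {m : ℕ}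
    (f : Fin m → σ) :
    (List.ofFn fun j => (MvPowerSeries.X (f j) : MvPowerSeries σ ℂ)) =
      (List.ofFn fun j => Pi.single (f j) 1).map (Fintype.linearCombination ℕ MvPowerSeries.X) := by
  simp [List.map_ofFn, Function.comp_def, Fintype.linearCombination_apply_single]

theorem Zstar_mul_Zstar_general (z : List ℕ → ℂ)
    (hz : ∀ w w' : List ℕ, z w * z w' = ((qs w w').map z).sum)
    (r s : ℕ) :
    Zstar z (List.ofFn fun j : Fin r => MvPowerSeries.X (Fin.castAdd s j)) *
        Zstar z (List.ofFn fun j : Fin s => MvPowerSeries.X (Fin.natAdd r j)) =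
      ((qs (List.ofFn fun j : Fin r => (MvPowerSeries.X (Fin.castAdd s j) : MvPowerSeries (Fin (r + s)) ℂ))
            (List.ofFn fun j : Fin s => MvPowerSeries.X (Fin.natAdd r j))).map
          (Zstar z)).sum := by
  rw [ofFn_X_eq_map_linearCombination (Fin.castAdd s),
    ofFn_X_eq_map_linearCombination (Fin.natAdd r)]
  set β₁ : List (Fin (r + s) → ℕ) := List.ofFn fun j => Pi.single (Fin.castAdd s j) 1
  set β₂ : List (Fin (r + s) → ℕ) := List.ofFn fun j => Pi.single (Fin.natAdd r j) 1
  have hβ : β₁.sum + β₂.sum = 1 := by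
    simp only [β₁, β₂, List.sum_ofFn]
    rw [← Fin.sum_univ_add (f := fun i => Pi.single i 1), Finset.univ_sum_single]
    rfl
  ext d
  have hprod := coeff_prod_Zstar_map_linearCombination z ![β₁, β₂] (by simpa using hβ) d
  rw [Fin.prod_univ_two, Fin.prod_univ_two] at hprod
  rw [coeff_sum_map_Zstar_qs z hβ d, ← hz]
  simpa using hprod

/-- `Z_*` turns the quasi-shuffle product into multiplication:
`Z_*(X₁,…,X_r)·Z_*(X_{r+1},…,X_{r+s}) = ∑_{α ∈ qs [X₁,…,X_r] [X_{r+1},…,X_{r+s}]} Z_*(α)`. -/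
theorem Zstar_mul_Zstar (z : List ℕ → ℂ) (hz1 : z [] = 1)
    (hz : ∀ w w' : List ℕ, z w * z w' = ((qs w w').map z).sum)
    (r s : ℕ) (hr : 1 ≤ r) (hs : 1 ≤ s) :
    Zstar z (List.ofFn fun j : Fin r => MvPowerSeries.X (Fin.castAdd s j)) *
        Zstar z (List.ofFn fun j : Fin s => MvPowerSeries.X (Fin.natAdd r j)) =
      ((qs (List.ofFn fun j : Fin r => (MvPowerSeries.X (Fin.castAdd s j) : MvPowerSeries (Fin (r + s)) ℂ))
            (List.ofFn fun j : Fin s => MvPowerSeries.X (Fin.natAdd r j))).map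
          (Zstar z)).sum :=
  Zstar_mul_Zstar_general z hz r s
end

section
/- Let ζE and Z_EMS be as in the context, and let D(t) := ∑_{k ≥ 0} ζE(-k) (-t)^k / k! denote the depth-one generating function. For every r ≥ 1, Z_EMS(t_1,…,t_r) = ∏_{n=1}^r D(t_n + t_{n+1} + ⋯ + t_r) in ℂ⟦t_1,…,t_r⟧; equivalently, Z_EMS(t_1,…,t_r) = Z_EMS(t_r) · Z_EMS(t_{r-1} + t_r) ⋯ Z_EMS(t_1 + ⋯ + t_r), where each factor Z_EMS in one variable is evaluated at the indicated sum of variables. -/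
open scoped BigOperators

/-- The generating series `Z_EMS(t₁,…,t_r) = ∑_k ζE(-k₁,…,-k_r) ∏ᵢ (-tᵢ)^{kᵢ}/kᵢ!`. -/
noncomputable def ZEMS (zE : List ℕ → ℂ) (r : ℕ) : MvPowerSeries (Fin r) ℂ :=
  fun d => zE (List.ofFn fun i : Fin r => d i) *
    ∏ i : Fin r, ((-1 : ℂ) ^ (d i) * ((d i).factorial : ℂ)⁻¹)

/-- The depth-one generating function `D(u) = ∑_{k≥0} ζE(-k) (-u)^k/k!`, evaluated at a
multivariate power series `u` with zero constant term; its coefficient at a monomial `d` is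
the (finite) sum `∑_k ζE(-k) · coeff d ((-u)^k/k!)`. -/
noncomputable def Done (zE : List ℕ → ℂ) {n : ℕ} (u : MvPowerSeries (Fin n) ℂ) :
    MvPowerSeries (Fin n) ℂ :=
  fun d => ∑ k ∈ Finset.range ((∑ i, d i) + 1),
    zE [k] * MvPowerSeries.coeff d (((k.factorial : ℂ))⁻¹ • (-u) ^ k)

/-! Write `f ↦ f(t₀, …, t_{r-1}, t_r + t_{r+1})` for the substitution merging the last two
variables; it is a ring homomorphism. In generating-function form the recursion (b) says exactly
`Z_EMS(t₀, …, t_{r+1}) = Z_EMS(t₀, …, t_r + t_{r+1}) · D(t_{r+1})`, and the substitution sends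
`D(t_n + ⋯ + t_r)` to `D(t_n + ⋯ + t_{r+1})`, so the product formula follows by induction on the
depth. -/

open MvPowerSeries Finset

section PowerSeries

variable {σ R : Type*} [CommSemiring R]

lemma coeff_sum_X_pow [Fintype σ] [DecidableEq σ] (s : Finset σ) (k : ℕ) (d : σ →₀ ℕ) :
    coeff d ((∑ m ∈ s, X m : MvPowerSeries σ R) ^ k) =
      if d.support ⊆ s ∧ ∑ i, d i = k then (d.multinomial : R) else 0 := by
  have hlin : (∑ m ∈ s, X m : MvPowerSeries σ R) =
      ↑(∑ i, (if i ∈ s then 1 else 0 : R) • MvPolynomial.X i : MvPolynomial σ R) := by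
    simp only [ite_smul, one_smul, zero_smul, sum_ite_mem, univ_inter]
    rw [← MvPolynomial.coeToMvPowerSeries.ringHom_apply, map_sum]
    simp
  rw [hlin, ← MvPolynomial.coe_pow, MvPolynomial.coeff_coe,
    MvPolynomial.coeff_linearCombination_X_pow_of_fintype, Finsupp.sum_fintype _ _ (by simp)]
  have hprod : (d.prod fun r m => (if r ∈ s then (1 : R) else 0) ^ m) =
      if d.support ⊆ s then 1 else 0 := by
    split_ifs with h
    · exact prod_eq_one fun r hr => by simp [h hr]
    · obtain ⟨r, hr, hrs⟩ := not_subset.mp h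
      exact prod_eq_zero hr (by simp [hrs, Finsupp.mem_support_iff.mp hr])
  rw [hprod]
  split_ifs <;> simp_all

lemma prod_X_pow_eq_monomial [Fintype σ] (n : σ →₀ ℕ) :
    ∏ j, (X j : MvPowerSeries σ R) ^ n j = monomial n 1 := by
  simp only [X_pow_eq, prod_monomial, prod_const_one, Finsupp.univ_sum_single]

lemma coeff_mul_eq_sum_range_of_single [DecidableEq σ] (f g : MvPowerSeries σ R) (j : σ)
    (hg : ∀ e, coeff e g ≠ 0 → e = Finsupp.single j (e j)) (d : σ →₀ ℕ) :
    coeff d (f * g) = ∑ i ∈ range (d j + 1),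
      coeff (d - Finsupp.single j i) f * coeff (Finsupp.single j i) g := by
  rw [coeff_mul]
  symm
  refine sum_bij_ne_zero (fun i _ _ => (d - Finsupp.single j i, Finsupp.single j i)) ?_ ?_ ?_ ?_
  · intro i hi _
    rw [HasAntidiagonal.mem_antidiagonal]
    exact tsub_add_cancel_of_le (Finsupp.single_le_iff.mpr (Nat.lt_succ_iff.mp (mem_range.mp hi)))
  · intro i _ _ i' _ _ h
    exact Finsupp.single_injective j (congrArg Prod.snd h)
  · intro q hq hne
    have hq2 := hg q.2 (right_ne_zero_of_mul hne)
    rw [HasAntidiagonal.mem_antidiagonal] at hq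
    have hle : q.2 j ≤ d j := by rw [← hq]; exact Nat.le_add_left _ _
    have himage : (d - Finsupp.single j (q.2 j), Finsupp.single j (q.2 j)) = q := by
      rw [← hq2, ← hq, add_tsub_cancel_right]
    refine ⟨q.2 j, mem_range.mpr (Nat.lt_succ_of_le hle), ?_, himage⟩
    rw [← himage] at hne
    exact hne
  · intro i _ _
    rfl

end PowerSeries

section NegExpCoeff

noncomputable def negExpCoeff (n : ℕ) : ℂ := (-1) ^ n * (n.factorial : ℂ)⁻¹

lemma choose_mul_negExpCoeff_add (a b : ℕ) :
    ((a + b).choose b : ℂ) * negExpCoeff (a + b) = negExpCoeff a * negExpCoeff b := by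
  have h : ((a + b).choose b * a.factorial * b.factorial : ℂ) = (a + b).factorial := by
    exact_mod_cast Nat.add_choose_mul_factorial_mul_factorial a b
  have ha : (a.factorial : ℂ) ≠ 0 := Nat.cast_ne_zero.mpr a.factorial_ne_zero
  have hb : (b.factorial : ℂ) ≠ 0 := Nat.cast_ne_zero.mpr b.factorial_ne_zero
  have hc : ((a + b).choose b : ℂ) ≠ 0 := Nat.cast_ne_zero.mpr (Nat.choose_pos (by omega)).ne'
  simp only [negExpCoeff, pow_add, ← h]
  field_simp

variable {σ : Type*} [Fintype σ]

lemma multinomial_mul_negExpCoeff_sum (d : σ →₀ ℕ) :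
    (d.multinomial : ℂ) * negExpCoeff (∑ i, d i) = ∏ i, negExpCoeff (d i) := by
  rw [Finsupp.multinomial_eq_of_support_subset (subset_univ _)]
  have hspec : (∏ i, ((d i).factorial : ℂ)) * Nat.multinomial univ d = (∑ i, d i).factorial := by
    exact_mod_cast Nat.multinomial_spec univ d
  have hm : (Nat.multinomial univ d : ℂ) ≠ 0 := Nat.cast_ne_zero.mpr (Nat.multinomial_pos _ _).ne'
  have hfac (i : σ) : ((d i).factorial : ℂ) ≠ 0 := Nat.cast_ne_zero.mpr (d i).factorial_ne_zero
  simp only [negExpCoeff, prod_mul_distrib, prod_pow_eq_pow_sum, prod_inv_distrib, ← hspec]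
  field_simp [prod_ne_zero_iff.mpr fun i _ => hfac i]

lemma prod_negExpCoeff_tsub_single_mul [DecidableEq σ] (d : σ →₀ ℕ) (j : σ) {i : ℕ}
    (hi : i ≤ d j) :
    (∏ k, negExpCoeff ((d - Finsupp.single j i) k)) * negExpCoeff i =
      (d j).choose i * ∏ k, negExpCoeff (d k) := by
  have hj := mem_univ j
  have hrest : ∀ k ∈ univ.erase j, (d - Finsupp.single j i) k = d k := fun k hk => by
    simp [Finsupp.single_eq_of_ne (ne_of_mem_erase hk)]
  rw [← mul_prod_erase _ _ hj, ← mul_prod_erase _ _ hj,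
    prod_congr rfl fun k hk => by rw [hrest k hk]]
  have hsplit := choose_mul_negExpCoeff_add (d j - i) i
  rw [Nat.sub_add_cancel hi] at hsplit
  simp only [Finsupp.tsub_apply, Finsupp.single_eq_same]
  rw [← mul_assoc, hsplit]
  ring

end NegExpCoeff

lemma coeff_ZEMS (zE : List ℕ → ℂ) (r : ℕ) (d : Fin r →₀ ℕ) :
    coeff d (ZEMS zE r) = zE (List.ofFn fun i => d i) * ∏ i, negExpCoeff (d i) := rfl

lemma coeff_Done_sum_X (zE : List ℕ → ℂ) {n : ℕ} (s : Finset (Fin n)) (d : Fin n →₀ ℕ) :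
    coeff d (Done zE (∑ m ∈ s, X m)) =
      if d.support ⊆ s then zE [∑ i, d i] * ∏ i, negExpCoeff (d i) else 0 := by
  have hterm (k : ℕ) : coeff d ((k.factorial : ℂ)⁻¹ • (-∑ m ∈ s, X m) ^ k) =
      if d.support ⊆ s ∧ ∑ i, d i = k then d.multinomial * negExpCoeff k else 0 := by
    rw [← neg_one_smul ℂ, smul_pow, smul_smul, map_smul, coeff_sum_X_pow, smul_eq_mul, mul_ite,
      mul_zero, negExpCoeff]
    congr 1
    ring
  change ∑ k ∈ range (∑ i, d i + 1), zE [k] * _ = _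
  simp only [hterm, mul_ite, mul_zero]
  rw [sum_eq_single_of_mem _ (self_mem_range_succ _) fun k _ hk => if_neg fun h => hk h.2.symm]
  simp only [and_true]
  split_ifs
  · rw [← multinomial_mul_negExpCoeff_sum]
  · rfl

lemma coeff_single_Done_sum_X (zE : List ℕ → ℂ) {n : ℕ} {s : Finset (Fin n)} {j : Fin n}
    (hj : j ∈ s) (i : ℕ) :
    coeff (Finsupp.single j i) (Done zE (∑ m ∈ s, X m)) = zE [i] * negExpCoeff i := by
  rw [coeff_Done_sum_X, if_pos (Finsupp.support_single_subset.trans (singleton_subset_iff.mpr hj)),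
    Finsupp.univ_sum_single_apply, prod_eq_single j (fun k _ hk => by
      rw [Finsupp.single_eq_of_ne hk]; simp [negExpCoeff]) (by simp),
    Finsupp.single_eq_same]

section MergeLast

variable {R : Type*} [CommRing R] {r : ℕ}

noncomputable def mergeLastExp (d : Fin (r + 2) →₀ ℕ) : Fin (r + 1) →₀ ℕ :=
  Finsupp.equivFunOnFinite.symm fun i =>
    d i.castSucc + if i = Fin.last r then d (Fin.last (r + 1)) else 0

noncomputable def splitLastExp (e : Fin (r + 1) →₀ ℕ) (b : ℕ) : Fin (r + 2) →₀ ℕ :=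
  Finsupp.equivFunOnFinite.symm fun j =>
    Fin.lastCases (motive := fun _ => ℕ) b (fun i => e i - if i = Fin.last r then b else 0) j

@[simp] lemma mergeLastExp_castSucc (d : Fin (r + 2) →₀ ℕ) (i : Fin r) :
    mergeLastExp d i.castSucc = d i.castSucc.castSucc := by
  simp [mergeLastExp, Fin.castSucc_ne_last]

@[simp] lemma mergeLastExp_last (d : Fin (r + 2) →₀ ℕ) :
    mergeLastExp d (Fin.last r) = d (Fin.last r).castSucc + d (Fin.last (r + 1)) := by
  simp [mergeLastExp]

@[simp] lemma splitLastExp_castSucc (e : Fin (r + 1) →₀ ℕ) (b : ℕ) (i : Fin (r + 1)) :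
    splitLastExp e b i.castSucc = e i - if i = Fin.last r then b else 0 := by
  simp [splitLastExp]

@[simp] lemma splitLastExp_last (e : Fin (r + 1) →₀ ℕ) (b : ℕ) :
    splitLastExp e b (Fin.last (r + 1)) = b := by
  simp [splitLastExp]

lemma mergeLastExp_splitLastExp (e : Fin (r + 1) →₀ ℕ) {b : ℕ} (hb : b ≤ e (Fin.last r)) :
    mergeLastExp (splitLastExp e b) = e := by
  ext i
  induction i using Fin.lastCases with
  | last => simp; omega
  | cast i => simp [Fin.castSucc_ne_last]

lemma splitLastExp_mergeLastExp (d : Fin (r + 2) →₀ ℕ) :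
    splitLastExp (mergeLastExp d) (d (Fin.last (r + 1))) = d := by
  ext j
  induction j using Fin.lastCases with
  | last => simp
  | cast i =>
    induction i using Fin.lastCases with
    | last => simp
    | cast i => simp [Fin.castSucc_ne_last]

lemma sum_mergeLastExp (d : Fin (r + 2) →₀ ℕ) : ∑ i, mergeLastExp d i = ∑ j, d j := by
  simp only [Fin.sum_univ_castSucc, mergeLastExp_castSucc, mergeLastExp_last]
  ring

variable (R r) in
noncomputable def mergeLastVars (i : Fin (r + 1)) : MvPowerSeries (Fin (r + 2)) R :=
  X i.castSucc + if i = Fin.last r then X (Fin.last (r + 1)) else 0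

lemma prod_mergeLastVars_pow (e : Fin (r + 1) →₀ ℕ) :
    ∏ i, mergeLastVars R r i ^ e i = ∑ b ∈ range (e (Fin.last r) + 1),
      (e (Fin.last r)).choose b • monomial (splitLastExp e b) (1 : R) := by
  simp only [← prod_X_pow_eq_monomial, Fin.prod_univ_castSucc, splitLastExp_castSucc,
    splitLastExp_last, mergeLastVars, Fin.castSucc_ne_last, if_false, if_true, add_zero, tsub_zero]
  rw [add_comm (X _), add_pow, mul_sum]
  refine sum_congr rfl fun b _ => ?_
  rw [nsmul_eq_mul]
  ring

lemma coeff_prod_mergeLastVars_pow (e : Fin (r + 1) →₀ ℕ) (d : Fin (r + 2) →₀ ℕ) :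
    coeff d (∏ i, mergeLastVars R r i ^ e i) =
      if e = mergeLastExp d then
        ((d (Fin.last r).castSucc + d (Fin.last (r + 1))).choose (d (Fin.last (r + 1))) : R)
      else 0 := by
  have hsplit : ∀ b ∈ range (e (Fin.last r) + 1),
      d = splitLastExp e b ↔ e = mergeLastExp d ∧ d (Fin.last (r + 1)) = b := by
    intro b hb
    constructor
    · rintro rfl
      exact ⟨(mergeLastExp_splitLastExp e (Nat.lt_succ_iff.mp (mem_range.mp hb))).symm,
        splitLastExp_last e b⟩
    · rintro ⟨rfl, rfl⟩
      exact (splitLastExp_mergeLastExp d).symm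
  rw [prod_mergeLastVars_pow, map_sum]
  simp only [map_nsmul, coeff_monomial]
  rw [sum_congr rfl fun b hb => by rw [if_congr (hsplit b hb) rfl rfl]]
  split_ifs with he
  · subst he
    simp
  · simp [he]

lemma hasSubst_mergeLastVars : HasSubst (mergeLastVars R r) :=
  hasSubst_of_constantCoeff_zero fun i => by unfold mergeLastVars; split_ifs <;> simp

variable (R r) in
/-- `mergeLast R r f = f(t₀, …, t_{r-1}, t_r + t_{r+1})`. -/
noncomputable def mergeLast : MvPowerSeries (Fin (r + 1)) R →ₐ[R] MvPowerSeries (Fin (r + 2)) R :=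
  substAlgHom hasSubst_mergeLastVars

lemma coeff_mergeLast (f : MvPowerSeries (Fin (r + 1)) R) (d : Fin (r + 2) →₀ ℕ) :
    coeff d (mergeLast R r f) =
      (d (Fin.last r).castSucc + d (Fin.last (r + 1))).choose (d (Fin.last (r + 1))) *
        coeff (mergeLastExp d) f := by
  rw [mergeLast, substAlgHom_apply, coeff_subst hasSubst_mergeLastVars,
    finsum_eq_single _ (mergeLastExp d)]
  · simp [Finsupp.prod_fintype, coeff_prod_mergeLastVars_pow, mul_comm]
  · intro e he
    simp [Finsupp.prod_fintype, coeff_prod_mergeLastVars_pow, he]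

end MergeLast

section Factorization

variable {r : ℕ}

lemma choose_mul_prod_negExpCoeff_mergeLastExp (d : Fin (r + 2) →₀ ℕ) :
    ((d (Fin.last r).castSucc + d (Fin.last (r + 1))).choose (d (Fin.last (r + 1))) : ℂ) *
      ∏ i, negExpCoeff (mergeLastExp d i) = ∏ j, negExpCoeff (d j) := by
  simp only [Fin.prod_univ_castSucc, mergeLastExp_castSucc, mergeLastExp_last]
  rw [mul_assoc, ← choose_mul_negExpCoeff_add]
  ring

lemma mergeLastExp_support_subset_Ici_iff (d : Fin (r + 2) →₀ ℕ) (n : Fin (r + 1)) :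
    (mergeLastExp d).support ⊆ Ici n ↔ d.support ⊆ Ici n.castSucc := by
  simp only [Finset.subset_iff, Finsupp.mem_support_iff, mem_Ici]
  constructor
  · intro h j hj
    induction j using Fin.lastCases with
    | last => exact Fin.le_last _
    | cast i =>
      have : d i.castSucc ≤ mergeLastExp d i := by simp [mergeLastExp]
      exact Fin.castSucc_le_castSucc_iff.mpr (h (by omega))
  · intro h i hi
    induction i using Fin.lastCases with
    | last => exact Fin.le_last _
    | cast i =>
      rw [mergeLastExp_castSucc] at hi
      exact Fin.castSucc_le_castSucc_iff.mp (h hi)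

lemma mergeLast_Done_sum_Ici (zE : List ℕ → ℂ) (n : Fin (r + 1)) :
    mergeLast ℂ r (Done zE (∑ m ∈ Ici n, X m)) = Done zE (∑ m ∈ Ici n.castSucc, X m) := by
  ext d
  rw [coeff_mergeLast, coeff_Done_sum_X, coeff_Done_sum_X, sum_mergeLastExp]
  simp only [mergeLastExp_support_subset_Ici_iff]
  split_ifs
  · rw [mul_left_comm, choose_mul_prod_negExpCoeff_mergeLastExp]
  · rw [mul_zero]

lemma List.ofFn_fin_add_two {α : Type*} (d : Fin (r + 2) → α) :
    List.ofFn d = List.ofFn (fun i : Fin r => d i.castSucc.castSucc) ++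
      [d (Fin.last r).castSucc, d (Fin.last (r + 1))] := by
  rw [List.ofFn_succ', List.ofFn_succ']
  simp

lemma ofFn_mergeLastExp (d : Fin (r + 2) →₀ ℕ) :
    List.ofFn (mergeLastExp d) = List.ofFn (fun i : Fin r => d i.castSucc.castSucc) ++
      [d (Fin.last r).castSucc + d (Fin.last (r + 1))] := by
  rw [List.ofFn_succ']
  simp

theorem ZEMS_add_two (zE : List ℕ → ℂ)
    (hErec : ∀ (w : List ℕ) (a b : ℕ),
      zE (w ++ [a, b]) =
        ∑ p ∈ antidiagonal b, (b.choose p.1 : ℂ) * zE [p.1] * zE (w ++ [a + p.2]))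
    (r : ℕ) :
    ZEMS zE (r + 2) =
      mergeLast ℂ r (ZEMS zE (r + 1)) * Done zE (∑ m ∈ Ici (Fin.last (r + 1)), X m) := by
  have hDone (e : Fin (r + 2) →₀ ℕ)
      (he : coeff e (Done zE (∑ m ∈ Ici (Fin.last (r + 1)), X m)) ≠ 0) :
      e = Finsupp.single (Fin.last (r + 1)) (e (Fin.last (r + 1))) := by
    rw [coeff_Done_sum_X] at he
    split_ifs at he with hsupp
    · exact Finsupp.support_subset_singleton.mp
        (hsupp.trans fun x hx => mem_singleton.mpr (Fin.last_le_iff.mp (mem_Ici.mp hx)))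
    · exact absurd rfl he
  ext d
  rw [coeff_mul_eq_sum_range_of_single _ _ _ hDone, coeff_ZEMS, List.ofFn_fin_add_two, hErec,
    Nat.sum_antidiagonal_eq_sum_range_succ_mk, sum_mul]
  refine sum_congr rfl fun i hmem => ?_
  have hi : i ≤ d (Fin.last (r + 1)) := Nat.lt_succ_iff.mp (mem_range.mp hmem)
  set d' := d - Finsupp.single (Fin.last (r + 1)) i
  have hA : d' (Fin.last r).castSucc = d (Fin.last r).castSucc := by
    simp [d', Finsupp.single_eq_of_ne]
  have hB : d' (Fin.last (r + 1)) = d (Fin.last (r + 1)) - i := by simp [d']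
  have hw (k : Fin r) : d' k.castSucc.castSucc = d k.castSucc.castSucc := by
    simp [d', Finsupp.single_eq_of_ne]
  have hmerge := choose_mul_prod_negExpCoeff_mergeLastExp d'
  have hsplit := prod_negExpCoeff_tsub_single_mul d _ hi
  rw [coeff_mergeLast, coeff_ZEMS, coeff_single_Done_sum_X zE (mem_Ici.mpr le_rfl),
    ofFn_mergeLastExp]
  simp only [hA, hB, hw] at hmerge ⊢
  set z := zE (List.ofFn (fun k : Fin r => d k.castSucc.castSucc) ++
    [d (Fin.last r).castSucc + (d (Fin.last (r + 1)) - i)])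
  linear_combination (-(z * zE [i] * negExpCoeff i)) * hmerge - z * zE [i] * hsplit

end Factorization

lemma ZEMS_one (zE : List ℕ → ℂ) : ZEMS zE 1 = Done zE (∑ m ∈ Ici 0, X m) := by
  ext d
  rw [coeff_ZEMS, coeff_Done_sum_X,
    if_pos (show d.support ⊆ Ici 0 from fun i _ => mem_Ici.mpr (Fin.zero_le i))]
  simp

theorem ZEMS_eq_prod_depth_one_general (zE : List ℕ → ℂ)
    (hErec : ∀ (w : List ℕ) (a b : ℕ),
      zE (w ++ [a, b]) =
        ∑ p ∈ Finset.HasAntidiagonal.antidiagonal b, (b.choose p.1 : ℂ) * zE [p.1] * zE (w ++ [a + p.2]))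
    (r : ℕ) (hr : 1 ≤ r) :
    ZEMS zE r =
      ∏ n : Fin r,
        Done zE (∑ m ∈ Finset.Ici n, (MvPowerSeries.X m : MvPowerSeries (Fin r) ℂ)) := by
  obtain ⟨r, rfl⟩ := Nat.exists_eq_add_of_le' hr
  induction r with
  | zero => rw [Fin.prod_univ_one, ZEMS_one]
  | succ r ih =>
    rw [ZEMS_add_two zE hErec, ih (Nat.le_add_left 1 r), map_prod]
    simp only [mergeLast_Done_sum_Ici]
    rw [Fin.prod_univ_castSucc fun n : Fin (r + 2) => Done zE (∑ m ∈ Ici n, X m)]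

/-- The generating function `Z_EMS` factors as the product of the depth-one generating function
evaluated at `uₙ = tₙ + t_{n+1} + ⋯ + t_r` for `n = 1, …, r`:
`Z_EMS(t₁,…,t_r) = Z_EMS(t_r)·Z_EMS(t_{r-1}+t_r)⋯Z_EMS(t₁+⋯+t_r)`. -/
theorem ZEMS_eq_prod_depth_one (zE : List ℕ → ℂ)
    (hE1 : ∀ k : ℕ, zE [k] = riemannZeta (-(k : ℂ)))
    (hErec : ∀ (w : List ℕ) (a b : ℕ),
      zE (w ++ [a, b]) =
        ∑ p ∈ Finset.HasAntidiagonal.antidiagonal b, (b.choose p.1 : ℂ) * zE [p.1] * zE (w ++ [a + p.2]))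
    (r : ℕ) (hr : 1 ≤ r) :
    ZEMS zE r =
      ∏ n : Fin r,
        Done zE (∑ m ∈ Finset.Ici n, (MvPowerSeries.X m : MvPowerSeries (Fin r) ℂ)) :=
  ZEMS_eq_prod_depth_one_general zE hErec r hr
end

section
/- Let 𝔷 and Z_* be as in the context with 𝔷([k]) = ζ(-k) for every k ∈ ℕ, and let ζE and Z_EMS be as in the context. Then in ℂ⟦t_1, t_2⟧: Z_EMS(t_1, t_2) = Z_*(t_1 + t_2, t_2) + Z_*(t_2, t_1 + t_2) + Z_*(t_1 + 2 t_2). -/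
open scoped BigOperators

/-!
Compare coefficients of `t₁^p t₂^q`. Up to the common factor `(-1)^(p+q) / (p! q!)`, the coefficient
of `Z_*(t₁+t₂, t₂)` is `∑_{i+j=q} C(q,i) 𝔷[p+j, i]`, that of `Z_*(t₂, t₁+t₂)` is
`∑_{i+j=q} C(q,i) 𝔷[i, p+j]` and that of `Z_*(t₁+2t₂)` is `2^q 𝔷[p+q]`. On the other side the recursion
gives `ζE(-p,-q) = ∑_{i+j=q} C(q,i) ζ(-i) ζ(-(p+j))`, and the harmonic product
`𝔷[i] 𝔷[k] = 𝔷[i,k] + 𝔷[k,i] + 𝔷[i+k]` splits it into exactly these three sums.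
-/

open MvPowerSeries Finset
open scoped Nat

theorem qs_singleton_singleton {M : Type*} [AddCommMonoid M] (a b : M) :
    qs [a] [b] = {[a, b], [b, a], [a + b]} := by
  rw [qs]
  simp [qs]

theorem Finset.sum_piFinset_succ {n : ℕ} {α : Fin (n + 1) → Type*} {β : Type*} [AddCommMonoid β]
    (S : ∀ i, Finset (α i)) (f : (∀ i, α i) → β) :
    ∑ r ∈ Fintype.piFinset S, f r =
      ∑ a ∈ S 0, ∑ t ∈ Fintype.piFinset (Fin.tail S), f (Fin.cons a t) := by
  have h := filter_piFinset_eq_map_consEquiv S (fun _ => True)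
  simp only [filter_true] at h
  rw [h, sum_map, sum_product]
  rfl

theorem sum_range_sum_range_ite_eq_sum_antidiagonal {M : Type*} [AddCommMonoid M] {p q N : ℕ}
    (h : p + q ≤ N) (g : ℕ → ℕ → M) :
    ∑ a ∈ range (N + 1), ∑ b ∈ range (N + 1), (if p ≤ a ∧ p + q = a + b then g a b else 0) =
      ∑ x ∈ antidiagonal q, g (p + x.2) x.1 := by
  rw [← sum_product', ← sum_filter]
  refine sum_nbij' (fun x => (x.2, x.1 - p)) (fun x => (p + x.2, x.1)) ?_ ?_ ?_ ?_ ?_ <;>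
    simp only [mem_filter, mem_product, mem_range, HasAntidiagonal.mem_antidiagonal, Prod.forall,
      Prod.mk.injEq, and_imp, and_true, true_and]
  all_goals first | (intros; omega) | (intros; congr; omega)

theorem Nat.cast_add_choose_div_factorial_mul_factorial {K : Type*} [Field K] [CharZero K]
    (p i j : ℕ) :
    ((p + j).choose p : K) / ((p + j)! * i !) = (i + j).choose i / (p ! * (i + j)!) := by
  rw [Nat.cast_add_choose, Nat.cast_add_choose]
  have hpj : ((p + j)! : K) ≠ 0 := Nat.cast_ne_zero.2 (Nat.factorial_ne_zero _)
  have hij : ((i + j)! : K) ≠ 0 := Nat.cast_ne_zero.2 (Nat.factorial_ne_zero _)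
  field_simp

section Zstar

variable {n : ℕ} (z : List ℕ → ℂ)

theorem coeff_Zstar_pair (u v : MvPowerSeries (Fin n) ℂ) (d : Fin n →₀ ℕ) :
    coeff d (Zstar z [u, v]) = ∑ a ∈ range (∑ i, d i + 1), ∑ b ∈ range (∑ i, d i + 1),
      z [a, b] * ((-1) ^ (a + b) / (a ! * b !)) * coeff d (u ^ a * v ^ b) := by
  rw [coeff_apply, Zstar]
  change ∑ k ∈ Fintype.piFinset (fun _ : Fin 2 => range (∑ i, d i + 1)), z (List.ofFn k) *
    coeff d (∏ j : Fin 2, ((k j)! : ℂ)⁻¹ • (-([u, v].get j)) ^ k j) = _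
  refine (sum_piFinset_succ _ _).trans (sum_congr rfl fun a _ => ?_)
  refine (sum_piFinset_succ _ _).trans (sum_congr rfl fun b _ => ?_)
  rw [Fintype.piFinset_of_isEmpty, Fintype.sum_unique, Fin.prod_univ_two]
  simp only [List.ofFn_succ, Fin.cons_zero, Fin.cons_one, Fin.cons_succ, List.ofFn_zero, List.get]
  rw [← neg_one_smul ℂ u, ← neg_one_smul ℂ v]
  simp only [smul_pow, smul_smul, smul_mul_smul_comm, coeff_smul]
  ring

theorem coeff_Zstar_singleton (u : MvPowerSeries (Fin n) ℂ) (d : Fin n →₀ ℕ) :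
    coeff d (Zstar z [u]) = ∑ a ∈ range (∑ i, d i + 1),
      z [a] * ((-1) ^ a / a !) * coeff d (u ^ a) := by
  rw [coeff_apply, Zstar]
  change ∑ k ∈ Fintype.piFinset (fun _ : Fin 1 => range (∑ i, d i + 1)), z (List.ofFn k) *
    coeff d (∏ j : Fin 1, ((k j)! : ℂ)⁻¹ • (-([u].get j)) ^ k j) = _
  refine (sum_piFinset_succ _ _).trans (sum_congr rfl fun a _ => ?_)
  rw [Fintype.piFinset_of_isEmpty, Fintype.sum_unique, Fin.prod_univ_one]
  simp only [List.ofFn_succ, Fin.cons_zero, List.ofFn_zero, List.get]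
  rw [← neg_one_smul ℂ u]
  simp only [smul_pow, smul_smul, coeff_smul]
  ring

end Zstar

section TwoVariables

theorem coeff_monomial_single_add_single {R : Type*} [Semiring R] (d : Fin 2 →₀ ℕ) (i j : ℕ)
    (r : R) :
    coeff d (monomial (Finsupp.single 0 i + Finsupp.single 1 j) r) =
      if d 0 = i then (if d 1 = j then r else 0) else 0 := by
  rw [coeff_monomial, ← ite_and]
  congr 1
  simp only [eq_iff_iff, Finsupp.ext_iff, Fin.forall_fin_two]
  simp

theorem coeff_X_add_C_mul_X_pow_mul_X_pow {R : Type*} [CommSemiring R] (c : R) (a b : ℕ)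
    (d : Fin 2 →₀ ℕ) :
    coeff d ((X 0 + C c * X 1) ^ a * X 1 ^ b : MvPowerSeries (Fin 2) R) =
      if d 0 ≤ a ∧ d 0 + d 1 = a + b then a.choose (d 0) * c ^ (a - d 0) else 0 := by
  have hterm : ∀ i, X 0 ^ i * (C c * X 1) ^ (a - i) * (a.choose i : MvPowerSeries (Fin 2) R) *
      X 1 ^ b =
        monomial (Finsupp.single 0 i + Finsupp.single 1 (a - i + b)) (a.choose i * c ^ (a - i)) := by
    intro i
    rw [mul_pow, X_pow_eq, X_pow_eq, X_pow_eq, ← map_pow, ← map_natCast (C (σ := Fin 2) (R := R)),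
      ← monomial_zero_eq_C_apply, ← monomial_zero_eq_C_apply]
    simp only [monomial_mul_monomial]
    congr 1
    · simp [add_assoc, Finsupp.single_add]
    · ring
  simp only [add_pow, sum_mul, hterm, map_sum, coeff_monomial_single_add_single, sum_ite_eq,
    mem_range]
  split_ifs <;> first | rfl | omega

variable (z : List ℕ → ℂ) (d : Fin 2 →₀ ℕ)

theorem coeff_Zstar_X_add_X_X :
    coeff d (Zstar z [X 0 + X 1, X 1]) = (-1) ^ (d 0 + d 1) / ((d 0)! * (d 1)!) *
      ∑ x ∈ antidiagonal (d 1), (d 1).choose x.1 * z [d 0 + x.2, x.1] := by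
  have hX : (X 0 + X 1 : MvPowerSeries (Fin 2) ℂ) = X 0 + C 1 * X 1 := by simp
  rw [coeff_Zstar_pair, Fin.sum_univ_two, hX]
  simp only [coeff_X_add_C_mul_X_pow_mul_X_pow, one_pow, mul_one, mul_ite, mul_zero]
  rw [sum_range_sum_range_ite_eq_sum_antidiagonal le_rfl, mul_sum]
  refine sum_congr rfl fun x hx => ?_
  rw [HasAntidiagonal.mem_antidiagonal] at hx
  rw [← hx]
  linear_combination (z [d 0 + x.2, x.1] * (-1) ^ (d 0 + x.2 + x.1)) *
    Nat.cast_add_choose_div_factorial_mul_factorial (K := ℂ) (d 0) x.1 x.2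

theorem coeff_Zstar_X_X_add_X :
    coeff d (Zstar z [X 1, X 0 + X 1]) = (-1) ^ (d 0 + d 1) / ((d 0)! * (d 1)!) *
      ∑ x ∈ antidiagonal (d 1), (d 1).choose x.1 * z [x.1, d 0 + x.2] := by
  have hX : (X 0 + X 1 : MvPowerSeries (Fin 2) ℂ) = X 0 + C 1 * X 1 := by simp
  rw [coeff_Zstar_pair, Fin.sum_univ_two, hX, sum_comm]
  simp_rw [mul_comm (X 1 ^ _ : MvPowerSeries (Fin 2) ℂ)]
  simp only [coeff_X_add_C_mul_X_pow_mul_X_pow, one_pow, mul_one, mul_ite, mul_zero]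
  rw [sum_range_sum_range_ite_eq_sum_antidiagonal (g := fun b a => _) le_rfl, mul_sum]
  refine sum_congr rfl fun x hx => ?_
  rw [HasAntidiagonal.mem_antidiagonal] at hx
  rw [← hx]
  linear_combination (z [x.1, d 0 + x.2] * (-1) ^ (d 0 + x.2 + x.1)) *
    Nat.cast_add_choose_div_factorial_mul_factorial (K := ℂ) (d 0) x.1 x.2

theorem coeff_Zstar_X_add_two_mul_X :
    coeff d (Zstar z [X 0 + 2 * X 1]) =
      (-1) ^ (d 0 + d 1) / ((d 0)! * (d 1)!) * (2 ^ d 1 * z [d 0 + d 1]) := by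
  have hX : ∀ a, (X 0 + 2 * X 1 : MvPowerSeries (Fin 2) ℂ) ^ a =
      (X 0 + C 2 * X 1) ^ a * X 1 ^ 0 := by
    simp [map_ofNat]
  rw [coeff_Zstar_singleton, Fin.sum_univ_two, sum_eq_single (d 0 + d 1)]
  · rw [hX, coeff_X_add_C_mul_X_pow_mul_X_pow, if_pos (by omega), add_tsub_cancel_left,
      Nat.cast_add_choose]
    have h : ((d 0 + d 1)! : ℂ) ≠ 0 := Nat.cast_ne_zero.2 (Nat.factorial_ne_zero _)
    field_simp
  · intro a _ ha
    rw [hX, coeff_X_add_C_mul_X_pow_mul_X_pow, if_neg (by omega), mul_zero]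
  · simp

theorem coeff_ZEMS_two (zE : List ℕ → ℂ) :
    coeff d (ZEMS zE 2) = (-1) ^ (d 0 + d 1) / ((d 0)! * (d 1)!) * zE [d 0, d 1] := by
  rw [coeff_apply, ZEMS, Fin.prod_univ_two, List.ofFn_succ, List.ofFn_succ, List.ofFn_zero]
  simp only [Fin.succ_zero_eq_one]
  ring

end TwoVariables

theorem zE_pair_eq_sum (z zE : List ℕ → ℂ)
    (hz : ∀ w w' : List ℕ, z w * z w' = ((qs w w').map z).sum)
    (hsingle : ∀ k : ℕ, zE [k] = z [k])
    (hrec : ∀ a b : ℕ,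
      zE [a, b] = ∑ x ∈ antidiagonal b, (b.choose x.1 : ℂ) * zE [x.1] * zE [a + x.2])
    (p q : ℕ) :
    zE [p, q] = ∑ x ∈ antidiagonal q, q.choose x.1 * z [p + x.2, x.1] +
      ∑ x ∈ antidiagonal q, q.choose x.1 * z [x.1, p + x.2] + 2 ^ q * z [p + q] := by
  have hchoose : ∑ x ∈ antidiagonal q, (q.choose x.1 : ℂ) = 2 ^ q := by
    rw [Nat.sum_antidiagonal_eq_sum_range_succ_mk]
    exact_mod_cast Nat.sum_range_choose q
  rw [hrec, ← hchoose, sum_mul, ← sum_add_distrib, ← sum_add_distrib]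
  refine sum_congr rfl fun x hx => ?_
  rw [HasAntidiagonal.mem_antidiagonal] at hx
  rw [hsingle, hsingle, mul_assoc, hz, qs_singleton_singleton]
  simp only [Multiset.insert_eq_cons, Multiset.map_cons, Multiset.sum_cons, Multiset.map_singleton,
    Multiset.sum_singleton]
  rw [show x.1 + (p + x.2) = p + q by omega]
  ring

theorem ZEMS_two_general (z : List ℕ → ℂ)
    (hz : ∀ w w' : List ℕ, z w * z w' = ((qs w w').map z).sum)
    (hzzeta : ∀ k : ℕ, z [k] = riemannZeta (-(k : ℂ)))
    (zE : List ℕ → ℂ)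
    (hE1 : ∀ k : ℕ, zE [k] = riemannZeta (-(k : ℂ)))
    (hErec : ∀ (w : List ℕ) (a b : ℕ),
      zE (w ++ [a, b]) =
        ∑ p ∈ Finset.HasAntidiagonal.antidiagonal b, (b.choose p.1 : ℂ) * zE [p.1] * zE (w ++ [a + p.2])) :
    ZEMS zE 2 =
      Zstar z [MvPowerSeries.X 0 + MvPowerSeries.X 1, MvPowerSeries.X 1] +
        Zstar z [MvPowerSeries.X 1, MvPowerSeries.X 0 + MvPowerSeries.X 1] +
        Zstar z [MvPowerSeries.X 0 + 2 * MvPowerSeries.X 1] := by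
  ext d
  rw [coeff_ZEMS_two, map_add, map_add, coeff_Zstar_X_add_X_X, coeff_Zstar_X_X_add_X,
    coeff_Zstar_X_add_two_mul_X,
    zE_pair_eq_sum z zE hz (fun k => (hE1 k).trans (hzzeta k).symm) (hErec [])]
  ring

/-- Depth two instance of the main theorem:
`Z_EMS(t₁,t₂) = Z_*(t₁+t₂, t₂) + Z_*(t₂, t₁+t₂) + Z_*(t₁+2t₂)`. -/
theorem ZEMS_two (z : List ℕ → ℂ) (hz1 : z [] = 1)
    (hz : ∀ w w' : List ℕ, z w * z w' = ((qs w w').map z).sum)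
    (hzzeta : ∀ k : ℕ, z [k] = riemannZeta (-(k : ℂ)))
    (zE : List ℕ → ℂ)
    (hE1 : ∀ k : ℕ, zE [k] = riemannZeta (-(k : ℂ)))
    (hErec : ∀ (w : List ℕ) (a b : ℕ),
      zE (w ++ [a, b]) =
        ∑ p ∈ Finset.HasAntidiagonal.antidiagonal b, (b.choose p.1 : ℂ) * zE [p.1] * zE (w ++ [a + p.2])) :
    ZEMS zE 2 =
      Zstar z [MvPowerSeries.X 0 + MvPowerSeries.X 1, MvPowerSeries.X 1] +
        Zstar z [MvPowerSeries.X 1, MvPowerSeries.X 0 + MvPowerSeries.X 1] +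
        Zstar z [MvPowerSeries.X 0 + 2 * MvPowerSeries.X 1] :=
  ZEMS_two_general z hz hzzeta zE hE1 hErec
end
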